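/- Let k be a field, d an odd integer with d ≥ 5, and m an integer with d+1 < m; set a = (d+1)/2. In k[x_1,…,x_m] let I = I_{a,2,m−1} + x_1x_m·I_{a−1,3,m−2}. Then for every v ∈ I_{a−1,2,m−2} and every w ∈ I_{a−2,3,m−3}, the product x_1 · x_{m−1} · x_m · v · w lies in I. -/

import Mathlib

/-- The variable `x_t` (1-indexed, for `1 ≤ t ≤ n`) of the polynomial ring
`k[x_1, …, x_n]`, realized as `MvPolynomial (Fin n) k`. -/
noncomputable def Xv (k : Type*) [Field k] (n t : ℕ) : MvPolynomial (Fin n) k :=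
  if h : 1 ≤ t ∧ t ≤ n then MvPolynomial.X ⟨t - 1, by omega⟩ else 0

/-- The ideal `I_{a,p,q}` of `k[x_1, …, x_n]`, generated by the squarefree monomials
`x_{t_1} ⋯ x_{t_a}` with `p ≤ t_1 < t_2 < ⋯ < t_a ≤ q` and `t_{j+1} ≥ t_j + 2`. -/
noncomputable def idealI (k : Type*) [Field k] (n a p q : ℕ) :
    Ideal (MvPolynomial (Fin n) k) :=
  Ideal.span { f | ∃ t : ℕ → ℕ, p ≤ t 0 ∧ t (a - 1) ≤ q ∧
    (∀ j, j + 1 < a → t j + 2 ≤ t (j + 1)) ∧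
    f = ∏ j ∈ Finset.range a, Xv k n (t j) }

/-!
Reduce to generators `x_1 x_{m-1} x_m · x^t · x^s`, with `t` a 2-sparse sequence of length
`a - 1` in `[2, m-2]` and `s` one of length `a - 2` in `[3, m-3]`. It suffices to find inside
`x^t x^s` a 2-sparse monomial of length `a - 1` either in `[2, m-3]` (then multiply by `x_{m-1}`)
or in `[3, m-2]` (then use the factor `x_1 x_m`). Unless `t` itself works, `t 0 = 2` and
`t (a-2) = m-2`; walking along `t 0, s 0, t 1, s 1, …`, some step must jump by at least 2 because
`m - 2 > 2 + 2 (a - 2)`, and splicing the head of one sequence onto the tail of the other at that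
step gives the required monomial.
-/

open Finset

theorem mul_mul_mem_of_mem_span {R : Type*} [CommSemiring R] {S T : Set R} {J : Ideal R} (f : R)
    (h : ∀ x ∈ S, ∀ y ∈ T, f * x * y ∈ J) {v w : R} (hv : v ∈ Ideal.span S)
    (hw : w ∈ Ideal.span T) : f * v * w ∈ J := by
  have hle : Ideal.span {f} * Ideal.span S * Ideal.span T ≤ J := by
    rw [Ideal.span_mul_span', Ideal.span_mul_span', Ideal.span_le]
    rintro _ ⟨_, ⟨_, rfl, x, hx, rfl⟩, y, hy, rfl⟩
    exact h x hx y hy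
  exact hle (Ideal.mul_mem_mul (Ideal.mul_mem_mul (Ideal.mem_span_singleton_self f) hv) hw)

theorem exists_gap_of_lt {t s : ℕ → ℕ} {n : ℕ} (h : t 0 + 2 * n < t n) :
    ∃ j < n, t j + 2 ≤ s j ∨ s j + 2 ≤ t (j + 1) := by
  by_contra! hsmall
  have hbound : ∀ i ≤ n, t i ≤ t 0 + 2 * i := by
    intro i hi
    induction i with
    | zero => simp
    | succ i ih =>
      have := hsmall i (by omega)
      have := ih (by omega)
      omega
  have := hbound n le_rfl
  omega

def IsSparseSeq (a p q : ℕ) (t : ℕ → ℕ) : Prop :=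
  p ≤ t 0 ∧ t (a - 1) ≤ q ∧ ∀ j, j + 1 < a → t j + 2 ≤ t (j + 1)

def seqAppend (j : ℕ) (t u : ℕ → ℕ) (i : ℕ) : ℕ :=
  if i < j then t i else u (i - j)

namespace IsSparseSeq

variable {a b j l p q p' q' : ℕ} {t s u : ℕ → ℕ}

theorem const (r : ℕ) : IsSparseSeq 1 r r fun _ => r :=
  ⟨le_rfl, le_rfl, fun _ hj => absurd hj (by omega)⟩

theorem take (ht : IsSparseSeq a p q t) (hj : j ≤ a) : IsSparseSeq j p (t (j - 1)) t :=
  ⟨ht.1, le_rfl, fun i hi => ht.2.2 i (by omega)⟩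

theorem drop (ht : IsSparseSeq a p q t) (hj : j < a) :
    IsSparseSeq (a - j) (t j) q fun i => t (j + i) :=
  ⟨le_rfl, by simpa [show j + (a - j - 1) = a - 1 by omega] using ht.2.1,
    fun i hi => by simpa [add_assoc] using ht.2.2 (j + i) (by omega)⟩

theorem append (ht : IsSparseSeq j p q t) (hu : IsSparseSeq l p' q' u) (hj : 0 < j)
    (hl : 0 < l) (hgap : t (j - 1) + 2 ≤ u 0) : IsSparseSeq (j + l) p q' (seqAppend j t u) := by
  obtain ⟨htp, -, htg⟩ := ht
  obtain ⟨-, huq, hug⟩ := hu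
  refine ⟨by simpa [seqAppend, hj] using htp, ?_, fun i hi => ?_⟩
  · rwa [seqAppend, if_neg (by omega), show j + l - 1 - j = l - 1 by omega]
  · simp only [seqAppend]
    split_ifs with hi₁ hi₂
    · exact htg i hi₂
    · obtain rfl : i = j - 1 := by omega
      rwa [show j - 1 + 1 - j = 0 by omega]
    · omega
    · simpa [show i + 1 - j = i - j + 1 by omega] using hug (i - j) (by omega)

theorem splice (ht : IsSparseSeq a p q t) (hs : IsSparseSeq b p' q' s) {i : ℕ} (hi : i < a)
    (hj : j < b) (hgap : t i + 2 ≤ s j) :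
    IsSparseSeq (i + 1 + (b - j)) p q' (seqAppend (i + 1) t fun l => s (j + l)) :=
  (ht.take hi).append (hs.drop hj) i.succ_pos (by omega) (by simpa using hgap)

end IsSparseSeq

section seqMonomial

variable (k : Type*) [Field k] (n : ℕ)

noncomputable def seqMonomial (a : ℕ) (t : ℕ → ℕ) : MvPolynomial (Fin n) k :=
  ∏ j ∈ range a, Xv k n (t j)

variable {k n} {a b j l p q : ℕ} {t s u : ℕ → ℕ}

theorem IsSparseSeq.seqMonomial_mem_idealI (ht : IsSparseSeq a p q t) :
    seqMonomial k n a t ∈ idealI k n a p q :=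
  Ideal.subset_span ⟨t, ht.1, ht.2.1, ht.2.2, rfl⟩

theorem seqMonomial_const_one (r : ℕ) : seqMonomial k n 1 (fun _ => r) = Xv k n r :=
  prod_range_one _

theorem seqMonomial_add :
    seqMonomial k n (a + b) t = seqMonomial k n a t * seqMonomial k n b fun i => t (a + i) :=
  prod_range_add _ a b

theorem seqMonomial_dvd_of_le (h : a ≤ b) : seqMonomial k n a t ∣ seqMonomial k n b t :=
  prod_dvd_prod_of_subset _ _ _ (range_subset_range.mpr h)

theorem seqMonomial_seqAppend :
    seqMonomial k n (j + l) (seqAppend j t u) = seqMonomial k n j t * seqMonomial k n l u := by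
  rw [seqMonomial_add]
  congr 1 <;> refine prod_congr rfl fun i hi => ?_
  · simp only [seqAppend, if_pos (mem_range.mp hi)]
  · simp only [seqAppend, if_neg (show ¬j + i < j by omega), Nat.add_sub_cancel_left]

theorem seqMonomial_splice_dvd {i : ℕ} (hi : i < a) (hj : j ≤ b) :
    seqMonomial k n (i + 1 + (b - j)) (seqAppend (i + 1) t fun l => s (j + l)) ∣
      seqMonomial k n a t * seqMonomial k n b s := by
  obtain ⟨c, rfl⟩ := Nat.exists_eq_add_of_le hj
  rw [seqMonomial_seqAppend, Nat.add_sub_cancel_left, seqMonomial_add (a := j)]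
  exact mul_dvd_mul (seqMonomial_dvd_of_le hi) (dvd_mul_left _ _)

theorem IsSparseSeq.exists_splice {p' q' : ℕ} (ht : IsSparseSeq a p q t)
    (hs : IsSparseSeq b p' q' s) {i : ℕ} (hi : i < a) (hj : j < b) (hgap : t i + 2 ≤ s j) :
    ∃ u, IsSparseSeq (i + 1 + (b - j)) p q' u ∧
      seqMonomial k n (i + 1 + (b - j)) u ∣ seqMonomial k n a t * seqMonomial k n b s :=
  ⟨_, ht.splice hs hi hj hgap, seqMonomial_splice_dvd hi hj.le⟩

theorem IsSparseSeq.seqMonomial_mul_Xv_mem_idealI (hu : IsSparseSeq b p q u) (hb : 0 < b)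
    {r : ℕ} (hr : q + 2 ≤ r) : seqMonomial k n b u * Xv k n r ∈ idealI k n (b + 1) p r := by
  have hgap : u (b - 1) + 2 ≤ r := by have := hu.2.1; omega
  simpa only [seqMonomial_seqAppend, seqMonomial_const_one] using
    (hu.append (IsSparseSeq.const r) hb one_pos hgap).seqMonomial_mem_idealI (k := k) (n := n)

end seqMonomial

section

variable {k : Type*} [Field k] {a m : ℕ} {t s : ℕ → ℕ}

theorem exists_sparse_dvd_seqMonomial_mul (ha : 2 ≤ a) (hm : 2 * a + 1 ≤ m)
    (ht : IsSparseSeq (a - 1) 2 (m - 2) t) (hs : IsSparseSeq (a - 2) 3 (m - 3) s) :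
    (∃ u, IsSparseSeq (a - 1) 2 (m - 3) u ∧
      seqMonomial k m (a - 1) u ∣ seqMonomial k m (a - 1) t * seqMonomial k m (a - 2) s) ∨
    (∃ u, IsSparseSeq (a - 1) 3 (m - 2) u ∧
      seqMonomial k m (a - 1) u ∣ seqMonomial k m (a - 1) t * seqMonomial k m (a - 2) s) := by
  have hlast : a - 1 - 1 = a - 2 := by omega
  have htq : t (a - 2) ≤ m - 2 := hlast ▸ ht.2.1
  by_cases htop : t (a - 2) ≤ m - 3
  · exact .inl ⟨t, ⟨ht.1, hlast ▸ htop, ht.2.2⟩, dvd_mul_right _ _⟩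
  by_cases hbot : 3 ≤ t 0
  · exact .inr ⟨t, ⟨hbot, ht.2.1, ht.2.2⟩, dvd_mul_right _ _⟩
  have ht0 := ht.1
  obtain ⟨j, hj, hgap | hgap⟩ := exists_gap_of_lt (t := t) (s := s) (n := a - 2) (by omega)
  · obtain ⟨u, hu, hdvd⟩ := ht.exists_splice (k := k) (n := m) hs (by omega) hj hgap
    rw [show j + 1 + (a - 2 - j) = a - 1 by omega] at hu hdvd
    exact .inl ⟨u, hu, hdvd⟩
  · obtain ⟨u, hu, hdvd⟩ := hs.exists_splice (k := k) (n := m) ht hj (by omega) hgap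
    rw [show j + 1 + (a - 1 - (j + 1)) = a - 1 by omega] at hu hdvd
    exact .inr ⟨u, hu, mul_comm (seqMonomial k m (a - 2) s) _ ▸ hdvd⟩

theorem Xv_mul_seqMonomial_mul_seqMonomial_mem (ha : 2 ≤ a) (hm : 2 * a + 1 ≤ m)
    (ht : IsSparseSeq (a - 1) 2 (m - 2) t) (hs : IsSparseSeq (a - 2) 3 (m - 3) s) :
    Xv k m 1 * Xv k m (m - 1) * Xv k m m * seqMonomial k m (a - 1) t *
        seqMonomial k m (a - 2) s ∈
      idealI k m a 2 (m - 1) +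
        Ideal.span {Xv k m 1 * Xv k m m} * idealI k m (a - 1) 3 (m - 2) := by
  rcases exists_sparse_dvd_seqMonomial_mul (k := k) ha hm ht hs with
    ⟨u, hu, g, hg⟩ | ⟨u, hu, g, hg⟩
  · refine Submodule.mem_sup_left ?_
    have hmem := hu.seqMonomial_mul_Xv_mem_idealI (k := k) (n := m) (by omega)
      (show m - 3 + 2 ≤ m - 1 by omega)
    rw [Nat.sub_add_cancel (by omega)] at hmem
    convert Ideal.mul_mem_right (Xv k m 1 * Xv k m m * g) _ hmem using 1
    rw [mul_assoc _ (seqMonomial k m (a - 1) t), hg]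
    ring
  · refine Submodule.mem_sup_right ?_
    convert Ideal.mul_mem_left _ (Xv k m (m - 1) * g) (Ideal.mul_mem_mul
      (Ideal.mem_span_singleton_self _) hu.seqMonomial_mem_idealI) using 1
    rw [mul_assoc _ (seqMonomial k m (a - 1) t), hg]
    ring

end

theorem product_mem_ideal_odd_general (k : Type*) [Field k] (d m : ℕ)
    (hd5 : 5 ≤ d) (hm : d + 1 < m) (a : ℕ) (ha : a = (d + 1) / 2)
    (v w : MvPolynomial (Fin m) k)
    (hv : v ∈ idealI k m (a - 1) 2 (m - 2))
    (hw : w ∈ idealI k m (a - 2) 3 (m - 3)) :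
    Xv k m 1 * Xv k m (m - 1) * Xv k m m * v * w ∈
      idealI k m a 2 (m - 1) +
        Ideal.span {Xv k m 1 * Xv k m m} * idealI k m (a - 1) 3 (m - 2) := by
  refine mul_mul_mem_of_mem_span _ ?_ hv hw
  rintro _ ⟨t, ht0, htq, htg, rfl⟩ _ ⟨s, hs0, hsq, hsg, rfl⟩
  exact Xv_mul_seqMonomial_mul_seqMonomial_mem (by omega) (by omega)
    ⟨ht0, htq, htg⟩ ⟨hs0, hsq, hsg⟩

/-- For `d` odd, `d ≥ 5`, `d + 1 < m`, `a = (d+1)/2`: for all `v ∈ I_{a−1,2,m−2}` and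
`w ∈ I_{a−2,3,m−3}`, the product `x_1 x_{m−1} x_m v w` lies in
`I = I_{a,2,m−1} + x_1x_m·I_{a−1,3,m−2}`. -/
theorem product_mem_ideal_odd (k : Type*) [Field k] (d m : ℕ)
    (hd : Odd d) (hd5 : 5 ≤ d) (hm : d + 1 < m) (a : ℕ) (ha : a = (d + 1) / 2)
    (v w : MvPolynomial (Fin m) k)
    (hv : v ∈ idealI k m (a - 1) 2 (m - 2))
    (hw : w ∈ idealI k m (a - 2) 3 (m - 3)) :
    Xv k m 1 * Xv k m (m - 1) * Xv k m m * v * w ∈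
      idealI k m a 2 (m - 1) +
        Ideal.span {Xv k m 1 * Xv k m m} * idealI k m (a - 1) 3 (m - 2) :=
  product_mem_ideal_odd_general k d m hd5 hm a ha v w hv hw
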